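/- arXiv:0803.3322 — 9 statements merged into one kernel-verified Lean document; each statement's English description precedes it below -/
import Mathlib

section
/- Let U ⊆ ℂ be open and let u₀, u₁, u₂, u₃ : U → ℂ be four-times differentiable functions each satisfying the fourth order linear differential equation y'''' + a₃(z)y''' + a₂(z)y'' + a₁(z)y' + a₀(z)y = 0 on U, where a₀, a₁, a₂, a₃ : U → ℂ. Assume that (u₀u₂' - u₀'u₂) + (u₁u₃' - u₁'u₃) = 0 identically on U. Define U(z) = (u₀u₂''' - u₀'''u₂) + (u₁u₃''' - u₁'''u₃). Then 2·U'(z) = -a₃(z)·U(z) on U. -/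
/-- Let `u₀, u₁, u₂, u₃` (with derivative functions `u1, u2, u3, u4` up to fourth order) be
solutions on an open set `U ⊆ ℂ` of `y'''' + a₃y''' + a₂y'' + a₁y' + a₀y = 0` with
`W(u₀,u₂) + W(u₁,u₃) = 0` on `U`.  Then the function
`U(z) = (u₀u₂''' - u₀'''u₂) + (u₁u₃''' - u₁'''u₃)` satisfies `2U'(z) = -a₃(z)U(z)` on `U`. -/
theorem wronskian_combination_satisfies_first_order_ode
    (U : Set ℂ) (hU : IsOpen U) (a0 a1 a2 a3 : ℂ → ℂ)
    (u u1 u2 u3 u4 : Fin 4 → ℂ → ℂ)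
    (hd1 : ∀ j, ∀ z ∈ U, HasDerivAt (u j) (u1 j z) z)
    (hd2 : ∀ j, ∀ z ∈ U, HasDerivAt (u1 j) (u2 j z) z)
    (hd3 : ∀ j, ∀ z ∈ U, HasDerivAt (u2 j) (u3 j z) z)
    (hd4 : ∀ j, ∀ z ∈ U, HasDerivAt (u3 j) (u4 j z) z)
    (hode : ∀ j, ∀ z ∈ U,
      u4 j z + a3 z * u3 j z + a2 z * u2 j z + a1 z * u1 j z + a0 z * u j z = 0)
    (hw : ∀ z ∈ U,
      (u 0 z * u1 2 z - u1 0 z * u 2 z) + (u 1 z * u1 3 z - u1 1 z * u 3 z) = 0) :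
    ∀ z ∈ U,
      2 * deriv (fun w =>
          (u 0 w * u3 2 w - u3 0 w * u 2 w) + (u 1 w * u3 3 w - u3 1 w * u 3 w)) z
        = -a3 z *
          ((u 0 z * u3 2 z - u3 0 z * u 2 z) + (u 1 z * u3 3 z - u3 1 z * u 3 z)) := by
  -- Step 1: the second Wronskian combination vanishes on U
  have hG2 : ∀ w ∈ U,
      (u 0 w * u2 2 w - u2 0 w * u 2 w) + (u 1 w * u2 3 w - u2 1 w * u 3 w) = 0 := by
    intro w hw'
    have h1 : HasDerivAt (fun x => (u 0 x * u1 2 x - u1 0 x * u 2 x)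
        + (u 1 x * u1 3 x - u1 1 x * u 3 x))
        ((u1 0 w * u1 2 w + u 0 w * u2 2 w - (u2 0 w * u 2 w + u1 0 w * u1 2 w))
          + (u1 1 w * u1 3 w + u 1 w * u2 3 w - (u2 1 w * u 3 w + u1 1 w * u1 3 w))) w :=
      (((hd1 0 w hw').mul (hd2 2 w hw')).sub ((hd2 0 w hw').mul (hd1 2 w hw'))).add
        (((hd1 1 w hw').mul (hd2 3 w hw')).sub ((hd2 1 w hw').mul (hd1 3 w hw')))
    have heq : (fun x => (u 0 x * u1 2 x - u1 0 x * u 2 x)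
        + (u 1 x * u1 3 x - u1 1 x * u 3 x)) =ᶠ[nhds w] fun _ => 0 := by
      filter_upwards [hU.mem_nhds hw'] with x hx using hw x hx
    have h0 : HasDerivAt (fun x => (u 0 x * u1 2 x - u1 0 x * u 2 x)
        + (u 1 x * u1 3 x - u1 1 x * u 3 x)) 0 w :=
      (hasDerivAt_const w (0:ℂ)).congr_of_eventuallyEq heq
    have huniq := h1.unique h0
    linear_combination huniq
  -- Step 2: U(w) + B(w) = 0 on U, where B is the (1,2)-derivative combination
  have hFB : ∀ w ∈ U,
      ((u 0 w * u3 2 w - u3 0 w * u 2 w) + (u 1 w * u3 3 w - u3 1 w * u 3 w))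
      + ((u1 0 w * u2 2 w - u2 0 w * u1 2 w) + (u1 1 w * u2 3 w - u2 1 w * u1 3 w)) = 0 := by
    intro w hw'
    have h1 : HasDerivAt (fun x => (u 0 x * u2 2 x - u2 0 x * u 2 x)
        + (u 1 x * u2 3 x - u2 1 x * u 3 x))
        ((u1 0 w * u2 2 w + u 0 w * u3 2 w - (u3 0 w * u 2 w + u2 0 w * u1 2 w))
          + (u1 1 w * u2 3 w + u 1 w * u3 3 w - (u3 1 w * u 3 w + u2 1 w * u1 3 w))) w :=
      (((hd1 0 w hw').mul (hd3 2 w hw')).sub ((hd3 0 w hw').mul (hd1 2 w hw'))).add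
        (((hd1 1 w hw').mul (hd3 3 w hw')).sub ((hd3 1 w hw').mul (hd1 3 w hw')))
    have heq : (fun x => (u 0 x * u2 2 x - u2 0 x * u 2 x)
        + (u 1 x * u2 3 x - u2 1 x * u 3 x)) =ᶠ[nhds w] fun _ => 0 := by
      filter_upwards [hU.mem_nhds hw'] with x hx using hG2 x hx
    have h0 : HasDerivAt (fun x => (u 0 x * u2 2 x - u2 0 x * u 2 x)
        + (u 1 x * u2 3 x - u2 1 x * u 3 x)) 0 w :=
      (hasDerivAt_const w (0:ℂ)).congr_of_eventuallyEq heq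
    have huniq := h1.unique h0
    linear_combination huniq
  intro z hz
  -- derivative of U(w)
  have hF : HasDerivAt (fun w => (u 0 w * u3 2 w - u3 0 w * u 2 w)
      + (u 1 w * u3 3 w - u3 1 w * u 3 w))
      ((u1 0 z * u3 2 z + u 0 z * u4 2 z - (u4 0 z * u 2 z + u3 0 z * u1 2 z))
        + (u1 1 z * u3 3 z + u 1 z * u4 3 z - (u4 1 z * u 3 z + u3 1 z * u1 3 z))) z :=
    (((hd1 0 z hz).mul (hd4 2 z hz)).sub ((hd4 0 z hz).mul (hd1 2 z hz))).add
      (((hd1 1 z hz).mul (hd4 3 z hz)).sub ((hd4 1 z hz).mul (hd1 3 z hz)))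
  -- derivative of B(w)
  have hB : HasDerivAt (fun w => (u1 0 w * u2 2 w - u2 0 w * u1 2 w)
      + (u1 1 w * u2 3 w - u2 1 w * u1 3 w))
      ((u2 0 z * u2 2 z + u1 0 z * u3 2 z - (u3 0 z * u1 2 z + u2 0 z * u2 2 z))
        + (u2 1 z * u2 3 z + u1 1 z * u3 3 z - (u3 1 z * u1 3 z + u2 1 z * u2 3 z))) z :=
    (((hd2 0 z hz).mul (hd3 2 z hz)).sub ((hd3 0 z hz).mul (hd2 2 z hz))).add
      (((hd2 1 z hz).mul (hd3 3 z hz)).sub ((hd3 1 z hz).mul (hd2 3 z hz)))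
  -- B = -U near z, hence B' = -U'
  have heqB : (fun w => (u1 0 w * u2 2 w - u2 0 w * u1 2 w)
      + (u1 1 w * u2 3 w - u2 1 w * u1 3 w)) =ᶠ[nhds z]
      (fun w => -(((u 0 w * u3 2 w - u3 0 w * u 2 w)
        + (u 1 w * u3 3 w - u3 1 w * u 3 w)))) := by
    filter_upwards [hU.mem_nhds hz] with x hx
    linear_combination hFB x hx
  have hB' : HasDerivAt (fun w => (u1 0 w * u2 2 w - u2 0 w * u1 2 w)
      + (u1 1 w * u2 3 w - u2 1 w * u1 3 w))
      (-((u1 0 z * u3 2 z + u 0 z * u4 2 z - (u4 0 z * u 2 z + u3 0 z * u1 2 z))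
        + (u1 1 z * u3 3 z + u 1 z * u4 3 z - (u4 1 z * u 3 z + u3 1 z * u1 3 z)))) z :=
    hF.neg.congr_of_eventuallyEq heqB
  have hA := hB.unique hB'
  rw [hF.deriv]
  linear_combination hA + u 0 z * hode 2 z hz - u 2 z * hode 0 z hz
    + u 1 z * hode 3 z hz - u 3 z * hode 1 z hz
    - a2 z * hG2 z hz - a1 z * hw z hz
end

section
/- Let U ⊆ ℂ be open and let u₀, u₁, u₂, u₃ : U → ℂ be thrice differentiable functions with (u₀u₂' - u₀'u₂) + (u₁u₃' - u₁'u₃) = 0 identically on U. Define U(z) = (u₀u₂''' - u₀'''u₂) + (u₁u₃''' - u₁'''u₃). Then the 3×3 Wronskian satisfies W(u₀,u₁,u₃) = -u₀·U(z) on U, where W(u₀,u₁,u₃) = det [[u₀,u₁,u₃],[u₀',u₁',u₃'],[u₀'',u₁'',u₃'']]. -/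
lemma deriv_zero_of_eq_zero' {U : Set ℂ} (hU : IsOpen U) {f : ℂ → ℂ} {d : ℂ} {z : ℂ}
    (hz : z ∈ U) (hf : HasDerivAt f d z) (h0 : ∀ w ∈ U, f w = 0) : d = 0 := by
  have he : f =ᶠ[nhds z] fun _ => (0 : ℂ) :=
    Filter.eventually_of_mem (hU.mem_nhds hz) h0
  exact hf.unique ((hasDerivAt_const z (0 : ℂ)).congr_of_eventuallyEq he)

/-- Let `u₀, u₁, u₂, u₃` be thrice differentiable on an open `U ⊆ ℂ` (with derivative
functions `u1, u2, u3`) satisfying `W(u₀,u₂) + W(u₁,u₃) = 0` on `U`.  With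
`U(z) = (u₀u₂''' - u₀'''u₂) + (u₁u₃''' - u₁'''u₃)`, the 3×3 Wronskian satisfies
`W(u₀,u₁,u₃) = -u₀·U(z)` on `U`. -/
theorem wronskian_three_eq_neg_u0_mul
    (U : Set ℂ) (hU : IsOpen U)
    (u u1 u2 u3 : Fin 4 → ℂ → ℂ)
    (hd1 : ∀ j, ∀ z ∈ U, HasDerivAt (u j) (u1 j z) z)
    (hd2 : ∀ j, ∀ z ∈ U, HasDerivAt (u1 j) (u2 j z) z)
    (hd3 : ∀ j, ∀ z ∈ U, HasDerivAt (u2 j) (u3 j z) z)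
    (hw : ∀ z ∈ U,
      (u 0 z * u1 2 z - u1 0 z * u 2 z) + (u 1 z * u1 3 z - u1 1 z * u 3 z) = 0) :
    ∀ z ∈ U,
      Matrix.det !![u 0 z, u 1 z, u 3 z;
                    u1 0 z, u1 1 z, u1 3 z;
                    u2 0 z, u2 1 z, u2 3 z]
        = -(u 0 z) *
          ((u 0 z * u3 2 z - u3 0 z * u 2 z) + (u 1 z * u3 3 z - u3 1 z * u 3 z)) := by
  have key1 : ∀ w ∈ U,
      (u 0 w * u2 2 w - u2 0 w * u 2 w) + (u 1 w * u2 3 w - u2 1 w * u 3 w) = 0 := by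
    intro w hw'
    have hder : HasDerivAt
        (fun y => (u 0 y * u1 2 y - u1 0 y * u 2 y) + (u 1 y * u1 3 y - u1 1 y * u 3 y))
        ((u1 0 w * u1 2 w + u 0 w * u2 2 w) - (u2 0 w * u 2 w + u1 0 w * u1 2 w)
          + ((u1 1 w * u1 3 w + u 1 w * u2 3 w) - (u2 1 w * u 3 w + u1 1 w * u1 3 w))) w :=
      (((hd1 0 w hw').mul (hd2 2 w hw')).sub ((hd2 0 w hw').mul (hd1 2 w hw'))).add
        (((hd1 1 w hw').mul (hd2 3 w hw')).sub ((hd2 1 w hw').mul (hd1 3 w hw')))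
    have h0 := deriv_zero_of_eq_zero' hU hw' hder hw
    linear_combination h0
  have key2 : ∀ w ∈ U,
      (u1 0 w * u2 2 w + u 0 w * u3 2 w) - (u3 0 w * u 2 w + u2 0 w * u1 2 w)
        + ((u1 1 w * u2 3 w + u 1 w * u3 3 w) - (u3 1 w * u 3 w + u2 1 w * u1 3 w)) = 0 := by
    intro w hw'
    have hder : HasDerivAt
        (fun y => (u 0 y * u2 2 y - u2 0 y * u 2 y) + (u 1 y * u2 3 y - u2 1 y * u 3 y))
        ((u1 0 w * u2 2 w + u 0 w * u3 2 w) - (u3 0 w * u 2 w + u2 0 w * u1 2 w)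
          + ((u1 1 w * u2 3 w + u 1 w * u3 3 w) - (u3 1 w * u 3 w + u2 1 w * u1 3 w))) w :=
      (((hd1 0 w hw').mul (hd3 2 w hw')).sub ((hd3 0 w hw').mul (hd1 2 w hw'))).add
        (((hd1 1 w hw').mul (hd3 3 w hw')).sub ((hd3 1 w hw').mul (hd1 3 w hw')))
    exact deriv_zero_of_eq_zero' hU hw' hder key1
  intro z hz
  have hA := hw z hz
  have hA1 := key1 z hz
  have hA2 := key2 z hz
  simp only [Matrix.det_fin_three, Matrix.of_apply, Matrix.cons_val', Matrix.cons_val_zero,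
    Matrix.cons_val_one, Matrix.head_cons, Matrix.empty_val', Matrix.cons_val_fin_one,
    Matrix.cons_val_two, Matrix.tail_cons, Matrix.head_fin_const]
  linear_combination (-(u1 0 z)) * hA1 + u2 0 z * hA + u 0 z * hA2
end

section
/- Let U ⊆ ℂ be open and let u₀, u₁, u₂, u₃ : U → ℂ be thrice differentiable. Then W(W(u₀,u₁), W(u₂,u₃)) = -u₀·W(u₁,u₂,u₃) + u₁·W(u₀,u₂,u₃), where for two functions W(f,g) = f·g' - f'·g and for three functions W(f,g,h) = det [[f,g,h],[f',g',h'],[f'',g'',h'']]. -/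
/-- For thrice differentiable `u₀, u₁, u₂, u₃` on an open `U ⊆ ℂ` (with derivative
functions `u1 j`, `u2 j`, `u3 j`),
`W(W(u₀,u₁), W(u₂,u₃)) = -u₀·W(u₁,u₂,u₃) + u₁·W(u₀,u₂,u₃)`. -/
theorem wronskian_of_wronskians
    (U : Set ℂ) (hU : IsOpen U)
    (u u1 u2 u3 : Fin 4 → ℂ → ℂ)
    (hd1 : ∀ j, ∀ z ∈ U, HasDerivAt (u j) (u1 j z) z)
    (hd2 : ∀ j, ∀ z ∈ U, HasDerivAt (u1 j) (u2 j z) z)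
    (hd3 : ∀ j, ∀ z ∈ U, HasDerivAt (u2 j) (u3 j z) z) :
    ∀ z ∈ U,
      (u 0 z * u1 1 z - u1 0 z * u 1 z) *
          deriv (fun w => u 2 w * u1 3 w - u1 2 w * u 3 w) z -
        deriv (fun w => u 0 w * u1 1 w - u1 0 w * u 1 w) z *
          (u 2 z * u1 3 z - u1 2 z * u 3 z)
      = -(u 0 z) * Matrix.det !![u 1 z, u 2 z, u 3 z;
                                 u1 1 z, u1 2 z, u1 3 z;
                                 u2 1 z, u2 2 z, u2 3 z]
        + u 1 z * Matrix.det !![u 0 z, u 2 z, u 3 z;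
                                u1 0 z, u1 2 z, u1 3 z;
                                u2 0 z, u2 2 z, u2 3 z] := by
  intro z hz
  have key : ∀ i j : Fin 4, deriv (fun w => u i w * u1 j w - u1 i w * u j w) z
      = u i z * u2 j z - u2 i z * u j z := by
    intro i j
    have h : HasDerivAt (fun w => u i w * u1 j w - u1 i w * u j w)
        (u1 i z * u1 j z + u i z * u2 j z - (u2 i z * u j z + u1 i z * u1 j z)) z :=
      ((hd1 i z hz).mul (hd2 j z hz)).sub ((hd2 i z hz).mul (hd1 j z hz))
    rw [h.deriv]; ring
  rw [key 0 1, key 2 3]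
  simp [Matrix.det_fin_three]
  ring
end

section
/- Let T ∈ M₂(ℂ) be symmetric with real part X and imaginary part Y (so T = X + iY with X, Y real symmetric). Let u = (u₁, u₀) ∈ ℂ² be a row vector and set φ = u·Y·ᵗu ∈ ℂ. Assume φ ≠ 0 and define Z = conj(T) + (2i/φ)·Y·ᵗu·u·Y ∈ M₂(ℂ). Then det(Im Z) = -(det Y / |φ|²)·(u·Y·ᵗū)², where ū denotes the componentwise complex conjugate of u and u·Y·ᵗū is a real number. -/
/-!
Write `w = Y·ᵗu`, so that `u·Y = ᵗw` and `φ = u·w`. Since `X` is real it drops out of `Im Z`, and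
`Im Z = -Y + φ⁻¹ w ᵗw + φ̄⁻¹ w̄ ᵗw̄`. For `2 × 2` matrices, adding `α v ᵗv + β v' ᵗv'` to `A`
changes `det A` by `α ᵗv adj(A) v + β ᵗv' adj(A) v' + α β det[v, v']²`. With `A = -Y` the two
adjugate terms are `-det Y` each, because `Y adj(Y) Y = det Y · Y`, and
`det[w, w̄] = det Y · det[u, ū]`. Everything collapses to
`-(det Y / |φ|²) (φ φ̄ - det Y · det[u, ū]²)`, and the Gram identity
`(u Y u)(ū Y ū) - (u Y ū)² = det Y · det[u, ū]²` turns the bracket into `(u Y ū)²`.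
-/

open Matrix

def matC (A : Matrix (Fin 2) (Fin 2) ℝ) : Matrix (Fin 2) (Fin 2) ℂ :=
  A.map (fun x => (x : ℂ))

namespace Matrix

variable {R : Type*} [CommRing R]

theorem IsSymm.dotProduct_mulVec_comm {n : Type*} [Fintype n] {Y : Matrix n n R}
    (hY : Y.IsSymm) (a b : n → R) : a ⬝ᵥ Y *ᵥ b = b ⬝ᵥ Y *ᵥ a := by
  rw [dotProduct_mulVec, ← mulVec_transpose, hY.eq, dotProduct_comm]

theorem IsSymm.mulVec_dotProduct_adjugate_mulVec_mulVec {n : Type*} [Fintype n] [DecidableEq n]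
    {Y : Matrix n n R} (hY : Y.IsSymm) (a : n → R) :
    Y *ᵥ a ⬝ᵥ Y.adjugate *ᵥ Y *ᵥ a = Y.det * (a ⬝ᵥ Y *ᵥ a) := by
  rw [← vecMul_transpose, ← dotProduct_mulVec, hY.eq, mulVec_mulVec, mul_adjugate, smul_mulVec,
    one_mulVec, dotProduct_smul, smul_eq_mul]

theorem IsSymm.gram_det_fin_two {Y : Matrix (Fin 2) (Fin 2) R} (hY : Y.IsSymm)
    (a b : Fin 2 → R) :
    (a ⬝ᵥ Y *ᵥ a) * (b ⬝ᵥ Y *ᵥ b) - (a ⬝ᵥ Y *ᵥ b) ^ 2 = Y.det * (of ![a, b]).det ^ 2 := by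
  have hgram : of ![a, b] * Y * (of ![a, b])ᵀ =
      !![a ⬝ᵥ Y *ᵥ a, a ⬝ᵥ Y *ᵥ b; b ⬝ᵥ Y *ᵥ a, b ⬝ᵥ Y *ᵥ b] := by
    ext i j
    fin_cases i <;> fin_cases j <;>
      simp [mul_apply, mulVec, vecMul, dotProduct, Fin.sum_univ_two] <;> ring
  have hdet := congrArg det hgram
  rw [det_mul, det_mul, det_transpose, det_fin_two_of, hY.dotProduct_mulVec_comm b a] at hdet
  linear_combination -hdet

theorem det_of_mulVec_fin_two (Y : Matrix (Fin 2) (Fin 2) R) (a b : Fin 2 → R) :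
    (of ![Y *ᵥ a, Y *ᵥ b]).det = Y.det * (of ![a, b]).det := by
  have hrows : of ![Y *ᵥ a, Y *ᵥ b] = of ![a, b] * Yᵀ := by
    ext i j
    fin_cases i <;> fin_cases j <;> simp [mul_apply, Fin.sum_univ_two] <;> ring
  rw [hrows, det_mul, det_transpose, mul_comm]

theorem adjugate_neg_fin_two (A : Matrix (Fin 2) (Fin 2) R) : adjugate (-A) = -adjugate A := by
  simp [adjugate_fin_two]

theorem det_add_smul_vecMulVec_add_smul_vecMulVec_fin_two (A : Matrix (Fin 2) (Fin 2) R)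
    (α β : R) (v w : Fin 2 → R) :
    (A + α • vecMulVec v v + β • vecMulVec w w).det =
      A.det + α * (v ⬝ᵥ adjugate A *ᵥ v) + β * (w ⬝ᵥ adjugate A *ᵥ w) +
        α * β * (of ![v, w]).det ^ 2 := by
  simp [det_fin_two, adjugate_fin_two, vecMulVec_apply, dotProduct, mulVec, Fin.sum_univ_two]
  ring

theorem IsSymm.det_neg_add_inv_smul_vecMulVec_mulVec_fin_two {K : Type*} [Field K]
    {Y : Matrix (Fin 2) (Fin 2) K} (hY : Y.IsSymm) {a b : Fin 2 → K}
    (ha : a ⬝ᵥ Y *ᵥ a ≠ 0) (hb : b ⬝ᵥ Y *ᵥ b ≠ 0) :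
    (-Y + (a ⬝ᵥ Y *ᵥ a)⁻¹ • vecMulVec (Y *ᵥ a) (Y *ᵥ a) +
        (b ⬝ᵥ Y *ᵥ b)⁻¹ • vecMulVec (Y *ᵥ b) (Y *ᵥ b)).det =
      -(Y.det * (a ⬝ᵥ Y *ᵥ b) ^ 2 / ((a ⬝ᵥ Y *ᵥ a) * (b ⬝ᵥ Y *ᵥ b))) := by
  simp only [det_add_smul_vecMulVec_add_smul_vecMulVec_fin_two, adjugate_neg_fin_two, det_neg,
    Fintype.card_fin, neg_mulVec, dotProduct_neg, hY.mulVec_dotProduct_adjugate_mulVec_mulVec,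
    det_of_mulVec_fin_two]
  field_simp
  linear_combination (-Y.det) * hY.gram_det_fin_two a b

end Matrix

theorem Complex.ofReal_det {n : Type*} [Fintype n] [DecidableEq n] (M : Matrix n n ℝ) :
    ((M.det : ℝ) : ℂ) = (M.map ofReal).det :=
  ofRealHom.map_det M

theorem det_matC (Y : Matrix (Fin 2) (Fin 2) ℝ) : (matC Y).det = Y.det :=
  (Complex.ofReal_det Y).symm

theorem star_matC_mulVec (Y : Matrix (Fin 2) (Fin 2) ℝ) (v : Fin 2 → ℂ) :
    star (matC Y *ᵥ v) = matC Y *ᵥ star v := by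
  ext i
  fin_cases i <;> simp [matC, mulVec, dotProduct]

theorem star_dotProduct_matC_mulVec (Y : Matrix (Fin 2) (Fin 2) ℝ) (u v : Fin 2 → ℂ) :
    star (u ⬝ᵥ matC Y *ᵥ v) = star u ⬝ᵥ matC Y *ᵥ star v := by
  rw [← star_dotProduct_star, star_matC_mulVec, dotProduct_comm]

open Complex in
theorem map_ofReal_map_im_conj_add_smul_vecMulVec (X Y : Matrix (Fin 2) (Fin 2) ℝ) (c : ℂ)
    (v : Fin 2 → ℂ) :
    (((matC X + I • matC Y).map (starRingEnd ℂ) + (2 * I * c) • vecMulVec v v).map im).map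
        ofReal =
      -matC Y + c • vecMulVec v v + star c • vecMulVec (star v) (star v) := by
  ext i j
  simp only [map_apply, Matrix.add_apply, Matrix.smul_apply, Matrix.neg_apply, vecMulVec_apply,
    matC, Pi.star_apply, smul_eq_mul]
  apply Complex.ext <;> simp <;> ring

theorem det_im_Z_formula_general
    (X Y : Matrix (Fin 2) (Fin 2) ℝ) (hY : Yᵀ = Y)
    (u : Fin 2 → ℂ)
    (hφ : dotProduct u ((matC Y).mulVec u) ≠ 0) :
    (dotProduct u ((matC Y).mulVec (star u))).im = 0 ∧
    ((((matC X + Complex.I • matC Y).map (starRingEnd ℂ) +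
          (2 * Complex.I / dotProduct u ((matC Y).mulVec u)) •
            Matrix.vecMulVec ((matC Y).mulVec u) (Matrix.vecMul u (matC Y))).map
        Complex.im).det : ℂ)
      = -((Y.det / Complex.normSq (dotProduct u ((matC Y).mulVec u)) : ℝ) : ℂ) *
          (dotProduct u ((matC Y).mulVec (star u))) ^ 2 := by
  have hYC : (matC Y).IsSymm := IsSymm.map hY _
  have hφ_star : star u ⬝ᵥ matC Y *ᵥ star u = star (u ⬝ᵥ matC Y *ᵥ u) :=
    (star_dotProduct_matC_mulVec Y u u).symm
  have hψ_real : star (u ⬝ᵥ matC Y *ᵥ star u) = u ⬝ᵥ matC Y *ᵥ star u := by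
    rw [star_dotProduct_matC_mulVec, star_star, hYC.dotProduct_mulVec_comm]
  refine ⟨Complex.conj_eq_iff_im.mp hψ_real, ?_⟩
  have hvecMul : u ᵥ* matC Y = matC Y *ᵥ u := by rw [← mulVec_transpose, hYC.eq]
  rw [hvecMul, div_eq_mul_inv, Complex.ofReal_det, map_ofReal_map_im_conj_add_smul_vecMulVec,
    star_matC_mulVec, star_inv₀, ← hφ_star,
    hYC.det_neg_add_inv_smul_vecMulVec_mulVec_fin_two hφ (hφ_star ▸ star_ne_zero.mpr hφ),
    hφ_star, det_matC, Complex.star_def, Complex.mul_conj]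
  push_cast
  ring

/-- Let `T = X + iY` with `X, Y` real symmetric, `u = (u₁, u₀)` a row vector,
`φ = u·Y·ᵗu ≠ 0`, and `Z = conj(T) + (2i/φ)·Y·ᵗu·u·Y`.  Then `u·Y·ᵗū` is real and
`det(Im Z) = -(det Y / |φ|²)·(u·Y·ᵗū)²`. -/
theorem det_im_Z_formula
    (X Y : Matrix (Fin 2) (Fin 2) ℝ) (hX : Xᵀ = X) (hY : Yᵀ = Y)
    (u : Fin 2 → ℂ)
    (hφ : dotProduct u ((matC Y).mulVec u) ≠ 0) :
    (dotProduct u ((matC Y).mulVec (star u))).im = 0 ∧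
    ((((matC X + Complex.I • matC Y).map (starRingEnd ℂ) +
          (2 * Complex.I / dotProduct u ((matC Y).mulVec u)) •
            Matrix.vecMulVec ((matC Y).mulVec u) (Matrix.vecMul u (matC Y))).map
        Complex.im).det : ℂ)
      = -((Y.det / Complex.normSq (dotProduct u ((matC Y).mulVec u)) : ℝ) : ℂ) *
          (dotProduct u ((matC Y).mulVec (star u))) ^ 2 :=
  det_im_Z_formula_general X Y hY u hφ
end

section
/- Let γ = [[A,B],[C,D]] ∈ Sp₄(ℝ) in 2×2 blocks, let T ∈ M₂(ℂ) be symmetric and u ∈ ℂ² a column vector, with φ = ᵗu·(Im T)·u ≠ 0. Set Z = conj(T) + (2i/φ)·(Im T)·u·ᵗu·(Im T). Assume C·T + D, C·conj(T) + D, and C·Z + D are invertible. Then ᵗu·(Im T)·(C·conj(T)+D)⁻¹·(C·T+D)·u / (ᵗu·(Im T)·u) = det(C·Z + D) / det(C·conj(T) + D). -/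
/-!
With `M = C·conj T + D`, the splitting `T = conj T + 2i·Im T` gives `C·T + D = M + 2i·C·Im T`, while
`C·Z + D` is the rank-one update `M + (2i/φ)·(C·Im T·u)·ᵗ(Im T·u)`. The matrix determinant lemma
therefore turns both sides into `1 + (2i/φ)·ᵗu·Im T·M⁻¹·C·Im T·u`.
-/

open Matrix

/-- The entrywise imaginary part of a complex matrix. -/
def imMat (T : Matrix (Fin 2) (Fin 2) ℂ) : Matrix (Fin 2) (Fin 2) ℝ :=
  T.map Complex.im

/-- The standard symplectic form matrix `J = [[0, -E], [E, 0]]` in `2×2` blocks, over `ℝ`. -/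
def J2R : Matrix (Fin 2 ⊕ Fin 2) (Fin 2 ⊕ Fin 2) ℝ :=
  Matrix.fromBlocks 0 (-1) 1 0

/-- The non-holomorphic modification `Z = conj(T) + (2i/φ)·(Im T)·u·ᵗu·(Im T)` of the period
matrix `T` introduced by Klemm et al., where `φ = ᵗu·(Im T)·u`. -/
noncomputable def KZ (T : Matrix (Fin 2) (Fin 2) ℂ) (u : Fin 2 → ℂ) :
    Matrix (Fin 2) (Fin 2) ℂ :=
  T.map (starRingEnd ℂ) +
    (2 * Complex.I / dotProduct u ((matC (imMat T)).mulVec u)) •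
      Matrix.vecMulVec ((matC (imMat T)).mulVec u) (Matrix.vecMul u (matC (imMat T)))

namespace Matrix

variable {n : Type*} [Fintype n] [DecidableEq n] {R : Type*} [CommRing R]

theorem det_add_vecMulVec {M : Matrix n n R} (hM : IsUnit M.det) (v w : n → R) :
    (M + vecMulVec v w).det = M.det * (1 + w ⬝ᵥ M⁻¹ *ᵥ v) := by
  rw [vecMulVec_eq (Fin 1), det_add_mul _ _ hM]
  congr 1
  rw [det_unique, add_apply, one_apply_eq, Matrix.mul_assoc, ← replicateCol_mulVec,
    replicateRow_mul_replicateCol_apply]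

theorem det_add_smul_vecMulVec_mulVec_vecMul {M : Matrix n n R} (hM : IsUnit M.det)
    (S P : Matrix n n R) (u : n → R) (c : R) :
    (M + c • vecMulVec (P *ᵥ u) (u ᵥ* S)).det = M.det * (1 + c * u ⬝ᵥ (S * M⁻¹ * P) *ᵥ u) := by
  rw [← smul_vecMulVec, det_add_vecMulVec hM, mulVec_smul, dotProduct_smul, smul_eq_mul,
    mulVec_mulVec, dotProduct_mulVec, vecMul_vecMul, ← dotProduct_mulVec, Matrix.mul_assoc]

theorem dotProduct_mul_nonsing_inv_mul_add_smul_mulVec {M : Matrix n n R} (hM : IsUnit M.det)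
    (S P : Matrix n n R) (u : n → R) (c : R) :
    u ⬝ᵥ (S * M⁻¹ * (M + c • P)) *ᵥ u = u ⬝ᵥ S *ᵥ u + c * u ⬝ᵥ (S * M⁻¹ * P) *ᵥ u := by
  rw [Matrix.mul_add, Matrix.mul_assoc S, nonsing_inv_mul M hM, Matrix.mul_one, mul_smul_comm,
    add_mulVec, smul_mulVec, dotProduct_add, dotProduct_smul, smul_eq_mul]

end Matrix

theorem Matrix.map_conj_add_two_I_smul_map_im {m n : Type*} (T : Matrix m n ℂ) :
    T.map (starRingEnd ℂ) + (2 * Complex.I) • T.map (fun z => (z.im : ℂ)) = T := by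
  ext i j
  apply Complex.ext <;> simp; ring

theorem phi_transformation_determinant_identity_general
    (C D : Matrix (Fin 2) (Fin 2) ℝ)
    (T : Matrix (Fin 2) (Fin 2) ℂ) (u : Fin 2 → ℂ)
    (hφ : dotProduct u ((matC (imMat T)).mulVec u) ≠ 0)
    (h2 : IsUnit (matC C * T.map (starRingEnd ℂ) + matC D)) :
    dotProduct u
        ((matC (imMat T) * (matC C * T.map (starRingEnd ℂ) + matC D)⁻¹ *
          (matC C * T + matC D)).mulVec u) /
      dotProduct u ((matC (imMat T)).mulVec u)
    = (matC C * KZ T u + matC D).det / (matC C * T.map (starRingEnd ℂ) + matC D).det := by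
  set S := matC (imMat T)
  set M := matC C * T.map (starRingEnd ℂ) + matC D
  have hM : IsUnit M.det := (isUnit_iff_isUnit_det M).mp h2
  have hCT : matC C * T + matC D = M + (2 * Complex.I) • (matC C * S) := by
    conv_lhs => rw [← T.map_conj_add_two_I_smul_map_im]
    rw [Matrix.mul_add, mul_smul_comm, add_right_comm]
    rfl
  have hCZ : matC C * KZ T u + matC D
      = M + (2 * Complex.I / u ⬝ᵥ S *ᵥ u) • vecMulVec ((matC C * S) *ᵥ u) (u ᵥ* S) := by
    rw [KZ, Matrix.mul_add, add_right_comm, mul_smul_comm, mul_vecMulVec, mulVec_mulVec]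
  rw [hCT, hCZ, dotProduct_mul_nonsing_inv_mul_add_smul_mulVec hM,
    det_add_smul_vecMulVec_mulVec_vecMul hM]
  field_simp [hM.ne_zero]

/-- For `γ = [[A,B],[C,D]] ∈ Sp₄(ℝ)`, `T` symmetric, `u ∈ ℂ²` with `φ = ᵗu·(Im T)·u ≠ 0`:
`ᵗu·(Im T)·(C·conj T + D)⁻¹·(C·T + D)·u / (ᵗu·(Im T)·u) = det(C·Z + D)/det(C·conj T + D)`,
where `Z` is the Klemm et al. non-holomorphic modification of `T`. -/
theorem phi_transformation_determinant_identity
    (A B C D : Matrix (Fin 2) (Fin 2) ℝ)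
    (hsp : (Matrix.fromBlocks A B C D)ᵀ * J2R * Matrix.fromBlocks A B C D = J2R)
    (T : Matrix (Fin 2) (Fin 2) ℂ) (hT : Tᵀ = T) (u : Fin 2 → ℂ)
    (hφ : dotProduct u ((matC (imMat T)).mulVec u) ≠ 0)
    (h1 : IsUnit (matC C * T + matC D))
    (h2 : IsUnit (matC C * T.map (starRingEnd ℂ) + matC D))
    (h3 : IsUnit (matC C * KZ T u + matC D)) :
    dotProduct u
        ((matC (imMat T) * (matC C * T.map (starRingEnd ℂ) + matC D)⁻¹ *
          (matC C * T + matC D)).mulVec u) /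
      dotProduct u ((matC (imMat T)).mulVec u)
    = (matC C * KZ T u + matC D).det / (matC C * T.map (starRingEnd ℂ) + matC D).det :=
  phi_transformation_determinant_identity_general C D T u hφ h2
end

section
/- Let γ = [[A,B],[C,D]] ∈ Sp₄(ℝ) in 2×2 blocks. Let T ∈ M₂(ℂ) be symmetric and u ∈ ℂ² a column vector with φ = ᵗu·(Im T)·u ≠ 0; set Z(T,u) = conj(T) + (2i/φ)·(Im T)·u·ᵗu·(Im T). Assume C·T + D is invertible, put T' = (A·T + B)·(C·T + D)⁻¹ and u' = (C·T + D)·u, and assume φ' = ᵗu'·(Im T')·u' ≠ 0 and C·Z(T,u) + D invertible. Then Z(T', u') = (A·Z(T,u) + B)·(C·Z(T,u) + D)⁻¹. -/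
/-!
For symmetric `S`, the Möbius action of `γ = [[A,B],[C,D]] ∈ Sp₄` satisfies
`γ·S' - γ·S = ᵗ(CS + D)⁻¹ (S' - S) (CS' + D)⁻¹`.
With `S = conj T`, `S' = T` this gives `Im T' = ᵗ(C T̄ + D)⁻¹ (Im T) (CT + D)⁻¹`, hence
`v' := (Im T')·u' = ᵗ(C T̄ + D)⁻¹ v` for `v := (Im T)·u`, and `φ' = φ + 2i·ᵗv'Cv`.
With `S = conj T`, `S' = Z(T,u) = T̄ + (2i/φ)·v·ᵗv` it shows that the image of a rank-one
perturbation of `T̄` is a rank-one perturbation of `conj T'` along `v'`; its coefficient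
`(2i/φ) / (1 + (2i/φ)·ᵗv'Cv)` is `2i/φ'`.
-/

open Matrix

theorem Matrix.map_nonsing_inv {n R S : Type*} [Fintype n] [DecidableEq n] [CommRing R]
    [CommRing S] (f : R →+* S) {M : Matrix n n R} (hM : IsUnit M.det) :
    M⁻¹.map f = (M.map f)⁻¹ := by
  refine (inv_eq_right_inv ?_).symm
  rw [← Matrix.map_mul, mul_nonsing_inv M hM, Matrix.map_one _ f.map_zero f.map_one]

section Moebius

variable {n R : Type*} [Fintype n] [DecidableEq n] [CommRing R]

noncomputable def moebius (A B C D S : Matrix n n R) : Matrix n n R :=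
  (A * S + B) * (C * S + D)⁻¹

theorem moebius_map {R' : Type*} [CommRing R'] (f : R →+* R') (A B C D S : Matrix n n R)
    (hS : IsUnit (C * S + D).det) :
    (moebius A B C D S).map f = moebius (A.map f) (B.map f) (C.map f) (D.map f) (S.map f) := by
  simp only [moebius, Matrix.map_mul, Matrix.map_add f (map_add f), map_nonsing_inv f hS]

variable {A B C D : Matrix n n R} (hγ : fromBlocks A B C D ∈ symplecticGroup n R)
include hγ

theorem transpose_denom_mul_numer_sub {S : Matrix n n R} (hS : Sᵀ = S) (S' : Matrix n n R) :
    (C * S + D)ᵀ * (A * S' + B) - (A * S + B)ᵀ * (C * S' + D) = S' - S := by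
  obtain ⟨hAC, hBD, hAD⟩ := SymplecticGroup.fromBlocks_mem_iff.mp hγ
  have hDA : Dᵀ * A - Bᵀ * C = 1 := by
    simpa using congrArg transpose hAD
  calc _ = S * (Cᵀ * A - Aᵀ * C) * S' - S * (Aᵀ * D - Cᵀ * B)
          + (Dᵀ * A - Bᵀ * C) * S' + (Dᵀ * B - Bᵀ * D) := by
        simp only [transpose_add, transpose_mul, hS]; noncomm_ring
    _ = S' - S := by
        rw [hAC, hBD, hAD, hDA, sub_self, sub_self]; noncomm_ring

theorem transpose_denom_mul_moebius {S : Matrix n n R} (hS : Sᵀ = S)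
    (hN : IsUnit (C * S + D).det) :
    (C * S + D)ᵀ * moebius A B C D S = (A * S + B)ᵀ := by
  have hsym : (C * S + D)ᵀ * (A * S + B) = (A * S + B)ᵀ * (C * S + D) :=
    sub_eq_zero.mp ((transpose_denom_mul_numer_sub hγ hS S).trans (sub_self S))
  rw [moebius, ← Matrix.mul_assoc, hsym, mul_nonsing_inv_cancel_right _ _ hN]

theorem moebius_transpose {S : Matrix n n R} (hS : Sᵀ = S) (hN : IsUnit (C * S + D).det) :
    (moebius A B C D S)ᵀ = moebius A B C D S := by
  have hNT : IsUnit (C * S + D)ᵀ.det := by rwa [det_transpose]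
  calc (moebius A B C D S)ᵀ = (C * S + D)ᵀ⁻¹ * (A * S + B)ᵀ := by
        rw [moebius, transpose_mul, transpose_nonsing_inv]
    _ = moebius A B C D S := by
        rw [← transpose_denom_mul_moebius hγ hS hN, nonsing_inv_mul_cancel_left _ _ hNT]

theorem moebius_sub_moebius {S : Matrix n n R} (hS : Sᵀ = S) (hN : IsUnit (C * S + D).det)
    {S' : Matrix n n R} (hM : IsUnit (C * S' + D).det) :
    moebius A B C D S' - moebius A B C D S = (C * S + D)ᵀ⁻¹ * (S' - S) * (C * S' + D)⁻¹ := by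
  have hNT : IsUnit (C * S + D)ᵀ.det := by rwa [det_transpose]
  have key : (C * S + D)ᵀ * (moebius A B C D S' - moebius A B C D S) * (C * S' + D)
      = S' - S := by
    rw [Matrix.mul_sub, Matrix.sub_mul, transpose_denom_mul_moebius hγ hS hN, moebius,
      ← Matrix.mul_assoc, nonsing_inv_mul_cancel_right _ _ hM]
    exact transpose_denom_mul_numer_sub hγ hS S'
  rw [← key, Matrix.mul_assoc (C * S + D)ᵀ, nonsing_inv_mul_cancel_left _ _ hNT,
    mul_nonsing_inv_cancel_right _ _ hM]

end Moebius

section RankOne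

variable {n K : Type*} [Fintype n] [DecidableEq n] [Field K]

theorem moebius_add_smul_vecMulVec {A B C D : Matrix n n K}
    (hγ : fromBlocks A B C D ∈ symplecticGroup n K) {S : Matrix n n K} (hS : Sᵀ = S)
    (hN : IsUnit (C * S + D).det) (c : K) (w : n → K)
    (hZ : IsUnit (C * (S + c • vecMulVec w w) + D).det) :
    moebius A B C D (S + c • vecMulVec w w) = moebius A B C D S +
      (c / (1 + c * (w ᵥ* (C * S + D)⁻¹ ⬝ᵥ C *ᵥ w))) •
        vecMulVec (w ᵥ* (C * S + D)⁻¹) (w ᵥ* (C * S + D)⁻¹) := by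
  set N := C * S + D
  set Zd := C * (S + c • vecMulVec w w) + D
  set w' := w ᵥ* N⁻¹
  set κ := w' ⬝ᵥ C *ᵥ w
  have hw'Z : w' ᵥ* Zd = (1 + c * κ) • w := by
    have hZd : Zd = N + c • vecMulVec (C *ᵥ w) w := by
      simp only [Zd, N, Matrix.mul_add, Matrix.mul_smul, mul_vecMulVec]; abel
    rw [hZd, vecMul_add, vecMul_vecMul, nonsing_inv_mul _ hN, vecMul_one, vecMul_smul,
      vecMul_vecMulVec, smul_smul, add_smul, one_smul]
  have hne : 1 + c * κ ≠ 0 := by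
    intro h0
    have hw' : w' = 0 := by
      simpa [h0, vecMul_vecMul, mul_nonsing_inv _ hZ] using congrArg (· ᵥ* Zd⁻¹) hw'Z
    simp [κ, hw'] at h0
  have hwZ : w ᵥ* Zd⁻¹ = (1 + c * κ)⁻¹ • w' := by
    rw [eq_inv_smul_iff₀ hne, ← smul_vecMul, ← hw'Z, vecMul_vecMul, mul_nonsing_inv _ hZ,
      vecMul_one]
  calc moebius A B C D (S + c • vecMulVec w w)
      = moebius A B C D S + N⁻¹ᵀ * (c • vecMulVec w w) * Zd⁻¹ := by
        rw [← sub_eq_iff_eq_add', moebius_sub_moebius hγ hS hN hZ, add_sub_cancel_left,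
          transpose_nonsing_inv]
    _ = _ := by
        rw [Matrix.mul_smul, Matrix.smul_mul, mul_vecMulVec, vecMulVec_mul, hwZ,
          mulVec_transpose, vecMulVec_smul, smul_smul, div_eq_mul_inv]

end RankOne

theorem matC_map_conj (X : Matrix (Fin 2) (Fin 2) ℝ) :
    (matC X).map (starRingEnd ℂ) = matC X := by
  ext i j; simp [matC]

theorem sub_map_conj_eq_smul_matC_imMat (T : Matrix (Fin 2) (Fin 2) ℂ) :
    T - T.map (starRingEnd ℂ) = (2 * Complex.I) • matC (imMat T) := by
  ext i j
  simp only [Matrix.sub_apply, map_apply, Complex.sub_conj, Matrix.smul_apply, smul_eq_mul, matC,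
    imMat]
  push_cast
  ring

theorem matC_imMat_transpose {T : Matrix (Fin 2) (Fin 2) ℂ} (hT : Tᵀ = T) :
    (matC (imMat T))ᵀ = matC (imMat T) := by
  rw [matC, imMat, ← transpose_map, ← transpose_map, hT]

theorem KZ_eq {T : Matrix (Fin 2) (Fin 2) ℂ} (hT : Tᵀ = T) (u : Fin 2 → ℂ) :
    KZ T u = T.map (starRingEnd ℂ) + (2 * Complex.I / (u ⬝ᵥ matC (imMat T) *ᵥ u)) •
      vecMulVec (matC (imMat T) *ᵥ u) (matC (imMat T) *ᵥ u) := by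
  rw [KZ, ← mulVec_transpose, matC_imMat_transpose hT]

theorem mem_symplecticGroup_matC {A B C D : Matrix (Fin 2) (Fin 2) ℝ}
    (hsp : (fromBlocks A B C D)ᵀ * J2R * fromBlocks A B C D = J2R) :
    fromBlocks (matC A) (matC B) (matC C) (matC D) ∈ symplecticGroup (Fin 2) ℂ := by
  have := SymplecticGroup.map_mem (SymplecticGroup.mem_iff'.mpr hsp) Complex.ofRealHom
  rwa [fromBlocks_map] at this

section Period

variable {A B C D : Matrix (Fin 2) (Fin 2) ℝ} {T : Matrix (Fin 2) (Fin 2) ℂ}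

theorem denom_map_conj :
    (matC C * T + matC D).map (starRingEnd ℂ) = matC C * T.map (starRingEnd ℂ) + matC D := by
  rw [Matrix.map_add _ (map_add _), Matrix.map_mul, matC_map_conj, matC_map_conj]

theorem isUnit_det_denom_map_conj (hM : IsUnit (matC C * T + matC D).det) :
    IsUnit (matC C * T.map (starRingEnd ℂ) + matC D).det := by
  rw [← denom_map_conj, ← RingHom.mapMatrix_apply, ← RingHom.map_det]
  exact hM.map _

theorem moebius_map_conj (hM : IsUnit (matC C * T + matC D).det) :
    (moebius (matC A) (matC B) (matC C) (matC D) T).map (starRingEnd ℂ)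
      = moebius (matC A) (matC B) (matC C) (matC D) (T.map (starRingEnd ℂ)) := by
  rw [moebius_map _ _ _ _ _ _ hM]
  simp only [matC_map_conj]

variable (hγ : fromBlocks (matC A) (matC B) (matC C) (matC D) ∈ symplecticGroup (Fin 2) ℂ)
  (hT : Tᵀ = T) (hM : IsUnit (matC C * T + matC D).det)
include hγ hT hM

theorem matC_imMat_moebius :
    matC (imMat (moebius (matC A) (matC B) (matC C) (matC D) T))
      = (matC C * T.map (starRingEnd ℂ) + matC D)ᵀ⁻¹ * matC (imMat T)
        * (matC C * T + matC D)⁻¹ := by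
  have hTb : (T.map (starRingEnd ℂ))ᵀ = T.map (starRingEnd ℂ) := by rw [← transpose_map, hT]
  have h := moebius_sub_moebius hγ hTb (isUnit_det_denom_map_conj hM) hM
  rw [← moebius_map_conj hM, sub_map_conj_eq_smul_matC_imMat, sub_map_conj_eq_smul_matC_imMat,
    Matrix.mul_smul, Matrix.smul_mul] at h
  exact smul_right_injective _ (by simp) h

theorem matC_imMat_moebius_mulVec (u : Fin 2 → ℂ) :
    matC (imMat (moebius (matC A) (matC B) (matC C) (matC D) T)) *ᵥ ((matC C * T + matC D) *ᵥ u)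
      = (matC (imMat T) *ᵥ u) ᵥ* (matC C * T.map (starRingEnd ℂ) + matC D)⁻¹ := by
  rw [matC_imMat_moebius hγ hT hM, mulVec_mulVec, nonsing_inv_mul_cancel_right _ _ hM,
    ← mulVec_mulVec, ← transpose_nonsing_inv, mulVec_transpose]

end Period

theorem dotProduct_denom_mulVec {C D : Matrix (Fin 2) (Fin 2) ℝ} {T : Matrix (Fin 2) (Fin 2) ℂ}
    (hM : IsUnit (matC C * T + matC D).det) (u : Fin 2 → ℂ) :
    (matC C * T + matC D) *ᵥ u
        ⬝ᵥ (matC (imMat T) *ᵥ u) ᵥ* (matC C * T.map (starRingEnd ℂ) + matC D)⁻¹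
      = u ⬝ᵥ matC (imMat T) *ᵥ u + 2 * Complex.I *
        ((matC (imMat T) *ᵥ u) ᵥ* (matC C * T.map (starRingEnd ℂ) + matC D)⁻¹
          ⬝ᵥ matC C *ᵥ (matC (imMat T) *ᵥ u)) := by
  have hM_eq : matC C * T + matC D = matC C * T.map (starRingEnd ℂ) + matC D
      + (2 * Complex.I) • (matC C * matC (imMat T)) := by
    rw [← Matrix.mul_smul, ← sub_map_conj_eq_smul_matC_imMat]; noncomm_ring
  set N := matC C * T.map (starRingEnd ℂ) + matC D
  set v := matC (imMat T) *ᵥ u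
  have hvN : v ᵥ* N⁻¹ ᵥ* N = v := by
    rw [vecMul_vecMul, nonsing_inv_mul _ (isUnit_det_denom_map_conj hM), vecMul_one]
  rw [dotProduct_comm, dotProduct_mulVec, hM_eq, vecMul_add, hvN, vecMul_smul, ← vecMul_vecMul,
    add_dotProduct, smul_dotProduct, ← dotProduct_mulVec, ← dotProduct_mulVec, dotProduct_comm,
    smul_eq_mul]

theorem Z_equivariance_general
    (A B C D : Matrix (Fin 2) (Fin 2) ℝ)
    (hsp : (Matrix.fromBlocks A B C D)ᵀ * J2R * Matrix.fromBlocks A B C D = J2R)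
    (T : Matrix (Fin 2) (Fin 2) ℂ) (hT : Tᵀ = T) (u : Fin 2 → ℂ)
    (hφ : dotProduct u ((matC (imMat T)).mulVec u) ≠ 0)
    (h1 : IsUnit (matC C * T + matC D))
    (h3 : IsUnit (matC C * KZ T u + matC D)) :
    KZ ((matC A * T + matC B) * (matC C * T + matC D)⁻¹) ((matC C * T + matC D).mulVec u)
      = (matC A * KZ T u + matC B) * (matC C * KZ T u + matC D)⁻¹ := by
  change KZ (moebius _ _ _ _ T) _ = moebius _ _ _ _ (KZ T u)
  have hγ := mem_symplecticGroup_matC hsp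
  have hM := (isUnit_iff_isUnit_det _).mp h1
  rw [KZ_eq (moebius_transpose hγ hT hM), matC_imMat_moebius_mulVec hγ hT hM,
    dotProduct_denom_mulVec hM, moebius_map_conj hM, KZ_eq hT,
    moebius_add_smul_vecMulVec hγ (by rw [← transpose_map, hT]) (isUnit_det_denom_map_conj hM)
      _ _ (by rwa [← KZ_eq hT, ← isUnit_iff_isUnit_det])]
  congr 2
  field_simp

/-- Equivariance of the non-holomorphic embedding: for `γ = [[A,B],[C,D]] ∈ Sp₄(ℝ)`, with
`T' = (AT+B)(CT+D)⁻¹` and `u' = (CT+D)u`, one has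
`Z(T',u') = (A·Z(T,u) + B)·(C·Z(T,u) + D)⁻¹`. -/
theorem Z_equivariance
    (A B C D : Matrix (Fin 2) (Fin 2) ℝ)
    (hsp : (Matrix.fromBlocks A B C D)ᵀ * J2R * Matrix.fromBlocks A B C D = J2R)
    (T : Matrix (Fin 2) (Fin 2) ℂ) (hT : Tᵀ = T) (u : Fin 2 → ℂ)
    (hφ : dotProduct u ((matC (imMat T)).mulVec u) ≠ 0)
    (h1 : IsUnit (matC C * T + matC D))
    (hφ' : dotProduct ((matC C * T + matC D).mulVec u)
        ((matC (imMat ((matC A * T + matC B) * (matC C * T + matC D)⁻¹))).mulVec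
          ((matC C * T + matC D).mulVec u)) ≠ 0)
    (h3 : IsUnit (matC C * KZ T u + matC D)) :
    KZ ((matC A * T + matC B) * (matC C * T + matC D)⁻¹) ((matC C * T + matC D).mulVec u)
      = (matC A * KZ T u + matC B) * (matC C * KZ T u + matC D)⁻¹ :=
  Z_equivariance_general A B C D hsp T hT u hφ h1 h3
end

section
/- Let H ⊆ ℂ be open and connected, let t : H → ℂ and τ₂, τ₃ : H → ℂ be differentiable with τ₂'(τ) = -t(τ) and τ₃'(τ) = t(τ)², and set T(τ) = [[τ, τ₂(τ)],[τ₂(τ), τ₃(τ)]]. Let γ = [[A,B],[C,D]] ∈ Sp₄(ℝ) in 2×2 blocks and let σ : H → H be differentiable with C·T(τ) + D invertible and T(σ(τ)) = (A·T(τ) + B)·(C·T(τ) + D)⁻¹ for all τ ∈ H. Writing C·T(τ)+D = [[𝔞,𝔟],[𝔠,𝔡]], assume 𝔠·t(τ)+𝔡 ≠ 0. Then for all τ ∈ H: σ'(τ) = (𝔠·t(τ)+𝔡)² / det(C·T(τ)+D)², and t(σ(τ)) = (𝔞·t(τ)+𝔟)/(𝔠·t(τ)+𝔡). -/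
open Matrix

/-- The symmetric matrix curve `T(τ) = [[τ, τ₂(τ)],[τ₂(τ), τ₃(τ)]]`. -/
def Tcurve (τ2 τ3 : ℂ → ℂ) : ℂ → Matrix (Fin 2) (Fin 2) ℂ :=
  fun τ => !![τ, τ2 τ; τ2 τ, τ3 τ]

section Symplectic

variable {n R : Type*} [Fintype n] [DecidableEq n] [CommRing R]

lemma fromBlocks_transpose_mul_J_mul_fromBlocks (A B C D : Matrix n n R) :
    (fromBlocks A B C D)ᵀ * J n R * fromBlocks A B C D
      = fromBlocks (Cᵀ * A - Aᵀ * C) (Cᵀ * B - Aᵀ * D) (Dᵀ * A - Bᵀ * C) (Dᵀ * B - Bᵀ * D) := by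
  simp only [J, fromBlocks_transpose, fromBlocks_multiply]
  congr 1 <;> simp [sub_eq_add_neg, add_comm]

lemma fromBlocks_mem_symplecticGroup_relations {A B C D : Matrix n n R}
    (h : fromBlocks A B C D ∈ symplecticGroup n R) :
    Cᵀ * A = Aᵀ * C ∧ Dᵀ * A - Bᵀ * C = 1 := by
  rw [SymplecticGroup.mem_iff', fromBlocks_transpose_mul_J_mul_fromBlocks, J] at h
  obtain ⟨h₁, -, h₃, -⟩ := fromBlocks_inj.mp h
  exact ⟨sub_eq_zero.mp h₁, h₃⟩

lemma transpose_mul_sub_mul_eq_one {A B C D T S : Matrix n n R} (hT : Tᵀ = T) (hS : Sᵀ = S)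
    (hCA : Cᵀ * A = Aᵀ * C) (hDA : Dᵀ * A - Bᵀ * C = 1) (h : S * (C * T + D) = A * T + B) :
    (C * T + D)ᵀ * (A - S * C) = 1 := by
  have hS' : (C * T + D)ᵀ * S = (A * T + B)ᵀ := by
    rw [← h, transpose_mul, hS]
  calc (C * T + D)ᵀ * (A - S * C) = T * (Cᵀ * A - Aᵀ * C) + (Dᵀ * A - Bᵀ * C) := by
        rw [mul_sub, ← Matrix.mul_assoc, hS']
        simp only [transpose_add, transpose_mul, hT]
        noncomm_ring
    _ = 1 := by rw [hCA, sub_self, Matrix.mul_zero, zero_add, hDA]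

lemma smul_vecMulVec_transpose_mulVec_eq {M A S C : Matrix n n R} {v w : n → R} {e : R}
    (hM : Mᵀ * (A - S * C) = 1)
    (h : e • vecMulVec w w * M + S * (C * vecMulVec v v) = A * vecMulVec v v) :
    e • vecMulVec (Mᵀ *ᵥ w) (Mᵀ *ᵥ w) = vecMulVec v v := by
  have h' : e • vecMulVec w w * M = (A - S * C) * vecMulVec v v := by
    rw [Matrix.sub_mul, Matrix.mul_assoc, ← h]; abel
  calc e • vecMulVec (Mᵀ *ᵥ w) (Mᵀ *ᵥ w) = Mᵀ * (e • vecMulVec w w * M) := by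
        rw [Matrix.smul_mul, Matrix.mul_smul, vecMulVec_mul, mul_vecMulVec, mulVec_transpose]
    _ = vecMulVec v v := by rw [h', ← Matrix.mul_assoc, hM, Matrix.one_mul]

end Symplectic

section Derivatives

open scoped Matrix.Norms.Elementwise

theorem HasDerivAt.matrix_mul {𝕜 : Type*} [NontriviallyNormedField 𝕜] {m n p : Type*}
    [Fintype m] [Fintype n] [Fintype p] {F : 𝕜 → Matrix m n 𝕜} {G : 𝕜 → Matrix n p 𝕜}
    {F' : Matrix m n 𝕜} {G' : Matrix n p 𝕜} {x : 𝕜} (hF : HasDerivAt F F' x)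
    (hG : HasDerivAt G G' x) : HasDerivAt (fun y => F y * G y) (F' * G x + F x * G') x := by
  have hF' : ∀ i k, HasDerivAt (fun y => F y i k) (F' i k) x := fun i k =>
    hasDerivAt_pi.mp (hasDerivAt_pi.mp hF i) k
  have hG' : ∀ k j, HasDerivAt (fun y => G y k j) (G' k j) x := fun k j =>
    hasDerivAt_pi.mp (hasDerivAt_pi.mp hG k) j
  refine hasDerivAt_pi.mpr fun i => hasDerivAt_pi.mpr fun j => ?_
  simp only [Matrix.add_apply, mul_apply, ← Finset.sum_add_distrib]
  exact HasDerivAt.fun_sum fun k _ => (hF' i k).fun_mul (hG' k j)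

variable {τ2 τ3 : ℂ → ℂ}

lemma hasDerivAt_Tcurve {t x : ℂ} (h2 : HasDerivAt τ2 (-t) x) (h3 : HasDerivAt τ3 (t ^ 2) x) :
    HasDerivAt (Tcurve τ2 τ3) (vecMulVec ![1, -t] ![1, -t]) x := by
  refine hasDerivAt_pi.mpr fun i => hasDerivAt_pi.mpr fun j => ?_
  fin_cases i <;> fin_cases j <;> simp [Tcurve, vecMulVec_apply, hasDerivAt_id', h2, h3, ← sq]

lemma Tcurve_transpose (x : ℂ) : (Tcurve τ2 τ3 x)ᵀ = Tcurve τ2 τ3 x := by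
  ext i j; fin_cases i <;> fin_cases j <;> rfl

lemma Tcurve_comp_mul_deriv_eq {H : Set ℂ} (hH : IsOpen H) {σ : ℂ → ℂ} {σ' x s t : ℂ}
    (hx : x ∈ H) (hσ : HasDerivAt σ σ' x)
    (h2 : HasDerivAt τ2 (-t) x) (h3 : HasDerivAt τ3 (t ^ 2) x)
    (h2σ : HasDerivAt τ2 (-s) (σ x)) (h3σ : HasDerivAt τ3 (s ^ 2) (σ x))
    {K L P Q : Matrix (Fin 2) (Fin 2) ℂ}
    (h : ∀ y ∈ H, Tcurve τ2 τ3 (σ y) * (K * Tcurve τ2 τ3 y + L) = P * Tcurve τ2 τ3 y + Q) :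
    σ' • vecMulVec ![1, -s] ![1, -s] * (K * Tcurve τ2 τ3 x + L)
        + Tcurve τ2 τ3 (σ x) * (K * vecMulVec ![1, -t] ![1, -t])
      = P * vecMulVec ![1, -t] ![1, -t] := by
  have hT := hasDerivAt_Tcurve h2 h3
  have hlhs := ((hasDerivAt_Tcurve h2σ h3σ).scomp x hσ).matrix_mul
    (((hasDerivAt_const x K).matrix_mul hT).add_const L)
  have hrhs := ((hasDerivAt_const x P).matrix_mul hT).add_const Q
  simpa using
    hlhs.unique (hrhs.congr_of_eventuallyEq (Filter.eventually_of_mem (hH.mem_nhds hx) h))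

end Derivatives

lemma eq_of_smul_vecMulVec_transpose_mulVec_eq {K : Type*} [Field K]
    {M : Matrix (Fin 2) (Fin 2) K} {e s t : K}
    (h : e • vecMulVec (Mᵀ *ᵥ ![1, -s]) (Mᵀ *ᵥ ![1, -s]) = vecMulVec ![1, -t] ![1, -t])
    (hcd : M 1 0 * t + M 1 1 ≠ 0) :
    e = (M 1 0 * t + M 1 1) ^ 2 / M.det ^ 2 ∧ s = (M 0 0 * t + M 0 1) / (M 1 0 * t + M 1 1) := by
  have h₀₀ : e * (M 0 0 - M 1 0 * s) ^ 2 = 1 := by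
    simpa [vecMulVec_apply, mulVec, dotProduct, sub_eq_add_neg, sq] using
      congrFun (congrFun h 0) 0
  have h₀₁ : e * (M 0 0 - M 1 0 * s) * (M 0 1 - M 1 1 * s) = -t := by
    simpa [vecMulVec_apply, mulVec, dotProduct, sub_eq_add_neg, mul_assoc] using
      congrFun (congrFun h 0) 1
  have hs : s * (M 1 0 * t + M 1 1) = M 0 0 * t + M 0 1 := by
    linear_combination (M 0 1 - M 1 1 * s) * h₀₀ - (M 0 0 - M 1 0 * s) * h₀₁
  have hdet : (M 0 0 - M 1 0 * s) * (M 1 0 * t + M 1 1) = M.det := by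
    rw [det_fin_two]; linear_combination -M 1 0 * hs
  have hu : M 0 0 - M 1 0 * s ≠ 0 := by rintro h; simp [h] at h₀₀
  refine ⟨?_, (eq_div_iff hcd).mpr hs⟩
  rw [eq_div_iff (pow_ne_zero 2 (hdet ▸ mul_ne_zero hu hcd)), ← hdet]
  linear_combination (M 1 0 * t + M 1 1) ^ 2 * h₀₀

theorem sigma_deriv_and_t_transform_general
    (H : Set ℂ) (hH : IsOpen H)
    (t τ2 τ3 : ℂ → ℂ)
    (hτ2 : ∀ τ ∈ H, HasDerivAt τ2 (-(t τ)) τ)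
    (hτ3 : ∀ τ ∈ H, HasDerivAt τ3 ((t τ) ^ 2) τ)
    (A B C D : Matrix (Fin 2) (Fin 2) ℝ)
    (hsp : (Matrix.fromBlocks A B C D)ᵀ * J2R * Matrix.fromBlocks A B C D = J2R)
    (σ : ℂ → ℂ) (hσmap : Set.MapsTo σ H H)
    (hσdiff : ∀ τ ∈ H, DifferentiableAt ℂ σ τ)
    (hinv : ∀ τ ∈ H, IsUnit (matC C * Tcurve τ2 τ3 τ + matC D))
    (heq : ∀ τ ∈ H, Tcurve τ2 τ3 (σ τ)
      = (matC A * Tcurve τ2 τ3 τ + matC B) * (matC C * Tcurve τ2 τ3 τ + matC D)⁻¹)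
    (hcd : ∀ τ ∈ H,
      (matC C * Tcurve τ2 τ3 τ + matC D) 1 0 * t τ
        + (matC C * Tcurve τ2 τ3 τ + matC D) 1 1 ≠ 0) :
    ∀ τ ∈ H,
      deriv σ τ
        = ((matC C * Tcurve τ2 τ3 τ + matC D) 1 0 * t τ
            + (matC C * Tcurve τ2 τ3 τ + matC D) 1 1) ^ 2 /
          ((matC C * Tcurve τ2 τ3 τ + matC D).det) ^ 2 ∧
      t (σ τ)
        = ((matC C * Tcurve τ2 τ3 τ + matC D) 0 0 * t τ
            + (matC C * Tcurve τ2 τ3 τ + matC D) 0 1) /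
          ((matC C * Tcurve τ2 τ3 τ + matC D) 1 0 * t τ
            + (matC C * Tcurve τ2 τ3 τ + matC D) 1 1) := by
  have hγ : fromBlocks (matC A) (matC B) (matC C) (matC D) ∈ symplecticGroup (Fin 2) ℂ := by
    have := SymplecticGroup.map_mem (SymplecticGroup.mem_iff'.mpr hsp) Complex.ofRealHom
    rwa [fromBlocks_map] at this
  obtain ⟨hCA, hDA⟩ := fromBlocks_mem_symplecticGroup_relations hγ
  have hmul : ∀ τ ∈ H, Tcurve τ2 τ3 (σ τ) * (matC C * Tcurve τ2 τ3 τ + matC D)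
      = matC A * Tcurve τ2 τ3 τ + matC B := fun τ hτ => by
    rw [heq τ hτ, nonsing_inv_mul_cancel_right _ _ ((isUnit_iff_isUnit_det _).mp (hinv τ hτ))]
  intro τ hτ
  have hderiv := Tcurve_comp_mul_deriv_eq hH hτ (hσdiff τ hτ).hasDerivAt (hτ2 τ hτ) (hτ3 τ hτ)
    (hτ2 _ (hσmap hτ)) (hτ3 _ (hσmap hτ)) hmul
  have hM := transpose_mul_sub_mul_eq_one (Tcurve_transpose τ) (Tcurve_transpose (σ τ)) hCA hDA
    (hmul τ hτ)
  exact eq_of_smul_vecMulVec_transpose_mulVec_eq (smul_vecMulVec_transpose_mulVec_eq hM hderiv)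
    (hcd τ hτ)

/-- If `τ₂' = -t`, `τ₃' = t²`, `γ = [[A,B],[C,D]] ∈ Sp₄(ℝ)` and `σ` satisfies
`T(σ(τ)) = (A·T(τ)+B)·(C·T(τ)+D)⁻¹` on a connected open `H`, then, writing
`C·T(τ)+D = [[𝔞,𝔟],[𝔠,𝔡]]`, one has `σ'(τ) = (𝔠t+𝔡)²/det(CT+D)²` and
`t(σ(τ)) = (𝔞t+𝔟)/(𝔠t+𝔡)`. -/
theorem sigma_deriv_and_t_transform
    (H : Set ℂ) (hH : IsOpen H) (hconn : IsConnected H)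
    (t τ2 τ3 : ℂ → ℂ)
    (hτ2 : ∀ τ ∈ H, HasDerivAt τ2 (-(t τ)) τ)
    (hτ3 : ∀ τ ∈ H, HasDerivAt τ3 ((t τ) ^ 2) τ)
    (A B C D : Matrix (Fin 2) (Fin 2) ℝ)
    (hsp : (Matrix.fromBlocks A B C D)ᵀ * J2R * Matrix.fromBlocks A B C D = J2R)
    (σ : ℂ → ℂ) (hσmap : Set.MapsTo σ H H)
    (hσdiff : ∀ τ ∈ H, DifferentiableAt ℂ σ τ)
    (hinv : ∀ τ ∈ H, IsUnit (matC C * Tcurve τ2 τ3 τ + matC D))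
    (heq : ∀ τ ∈ H, Tcurve τ2 τ3 (σ τ)
      = (matC A * Tcurve τ2 τ3 τ + matC B) * (matC C * Tcurve τ2 τ3 τ + matC D)⁻¹)
    (hcd : ∀ τ ∈ H,
      (matC C * Tcurve τ2 τ3 τ + matC D) 1 0 * t τ
        + (matC C * Tcurve τ2 τ3 τ + matC D) 1 1 ≠ 0) :
    ∀ τ ∈ H,
      deriv σ τ
        = ((matC C * Tcurve τ2 τ3 τ + matC D) 1 0 * t τ
            + (matC C * Tcurve τ2 τ3 τ + matC D) 1 1) ^ 2 /
          ((matC C * Tcurve τ2 τ3 τ + matC D).det) ^ 2 ∧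
      t (σ τ)
        = ((matC C * Tcurve τ2 τ3 τ + matC D) 0 0 * t τ
            + (matC C * Tcurve τ2 τ3 τ + matC D) 0 1) /
          ((matC C * Tcurve τ2 τ3 τ + matC D) 1 0 * t τ
            + (matC C * Tcurve τ2 τ3 τ + matC D) 1 1) :=
  sigma_deriv_and_t_transform_general H hH t τ2 τ3 hτ2 hτ3 A B C D hsp σ hσmap hσdiff hinv heq hcd
end

section
/- Let H ⊆ ℂ be open and connected, t : H → ℂ twice differentiable, τ₂, τ₃ : H → ℂ differentiable with τ₂' = -t and τ₃' = t², and T(τ) = [[τ, τ₂],[τ₂, τ₃]]. Let γ = [[A,B],[C,D]] ∈ Sp₄(ℝ) and σ : H → H differentiable with C·T(τ)+D invertible and T(σ(τ)) = (A·T(τ)+B)·(C·T(τ)+D)⁻¹ for all τ. Write C·T(τ)+D = [[𝔞,𝔟],[𝔠,𝔡]] and assume 𝔠·t+𝔡 ≠ 0 on H. Then the function v = dt/dτ satisfies v(σ(τ)) = (det(C·T(τ)+D)³ / (𝔠·t(τ)+𝔡)⁴)·v(τ) for all τ ∈ H. -/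
/-!
Differentiating `T(σ τ) · M(τ) = A·T(τ) + B`, with `M = C·T + D`, and using the symplectic relations
gives `σ' · ᵗM · T'(σ τ) · M = T'(τ)`. Here `T' = w wᵀ` with `w = (1, -t)` has rank one, so the
entries of this identity say `σ' (𝔞 - t(σ) 𝔠)² = 1` and `t(σ) = (𝔞 t + 𝔟) / (𝔠 t + 𝔡)`; in
particular `𝔞 - t(σ) 𝔠 = det M / (𝔠 t + 𝔡)`. Differentiating the Möbius relation, in which the
`τ`-dependence of `M` drops out because `M' (t, 1)ᵀ = C w wᵀ (t, 1)ᵀ = 0`, gives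
`v(σ) σ' (𝔠 t + 𝔡) = v (𝔞 - t(σ) 𝔠)`, and the formula follows.
-/

open Matrix

section MatrixCurve

variable {𝕜 : Type*} [NontriviallyNormedField 𝕜] {m n p : Type*} {x s : 𝕜}

-- Entrywise, since Mathlib puts no global norm on matrices.
def HasMatrixDerivAt (F : 𝕜 → Matrix m n 𝕜) (F' : Matrix m n 𝕜) (x : 𝕜) : Prop :=
  ∀ i j, HasDerivAt (fun y => F y i j) (F' i j) x

theorem HasDerivAt.eq_of_eqOn {f g : 𝕜 → 𝕜} {f' g' : 𝕜} {U : Set 𝕜} (hU : IsOpen U)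
    (hx : x ∈ U) (hfg : Set.EqOn f g U) (hf : HasDerivAt f f' x) (hg : HasDerivAt g g' x) :
    f' = g' :=
  (hf.congr_of_eventuallyEq (Filter.eventuallyEq_of_mem (hU.mem_nhds hx) hfg.symm)).unique hg

namespace HasMatrixDerivAt

theorem eq_of_eqOn {F G : 𝕜 → Matrix m n 𝕜} {F' G' : Matrix m n 𝕜} {U : Set 𝕜} (hU : IsOpen U)
    (hx : x ∈ U) (hFG : Set.EqOn F G U) (hF : HasMatrixDerivAt F F' x)
    (hG : HasMatrixDerivAt G G' x) : F' = G' := by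
  ext i j
  exact (hF i j).eq_of_eqOn hU hx (fun y hy => congrFun (congrFun (hFG hy) i) j) (hG i j)

theorem mul [Fintype n] {F : 𝕜 → Matrix m n 𝕜} {G : 𝕜 → Matrix n p 𝕜} {F' G'}
    (hF : HasMatrixDerivAt F F' x) (hG : HasMatrixDerivAt G G' x) :
    HasMatrixDerivAt (fun y => F y * G y) (F' * G x + F x * G') x := by
  intro i j
  simp only [Matrix.add_apply, Matrix.mul_apply, ← Finset.sum_add_distrib]
  exact HasDerivAt.fun_sum fun k _ => (hF i k).mul (hG k j)

theorem const_mul_add [Fintype n] {F : 𝕜 → Matrix n p 𝕜} {F'} (hF : HasMatrixDerivAt F F' x)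
    (A : Matrix m n 𝕜) (B : Matrix m p 𝕜) :
    HasMatrixDerivAt (fun y => A * F y + B) (A * F') x := by
  intro i j
  simp only [Matrix.add_apply, Matrix.mul_apply]
  exact (HasDerivAt.fun_sum fun k _ => (hF k j).const_mul (A i k)).add_const _

theorem comp {F : 𝕜 → Matrix m n 𝕜} {F'} {σ : 𝕜 → 𝕜} (hF : HasMatrixDerivAt F F' (σ x))
    (hσ : HasDerivAt σ s x) : HasMatrixDerivAt (fun y => F (σ y)) (s • F') x := by
  intro i j
  rw [Matrix.smul_apply, smul_eq_mul, mul_comm]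
  exact (hF i j).comp x hσ

end HasMatrixDerivAt

end MatrixCurve

theorem transpose_mul_sub_mul_eq_one_s13 {R n : Type*} [CommRing R] [Fintype n] [DecidableEq n]
    {A B C D T T' : Matrix n n R} (hγ : fromBlocks A B C D ∈ symplecticGroup n R)
    (hT : T.IsSymm) (hT' : T'.IsSymm) (h : T' * (C * T + D) = A * T + B) :
    (C * T + D)ᵀ * (A - T' * C) = 1 := by
  obtain ⟨hAC, -, hAD⟩ := SymplecticGroup.fromBlocks_mem_iff.mp hγ
  have hN : (C * T + D)ᵀ * T' = (A * T + B)ᵀ := by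
    rw [← h, transpose_mul, hT'.eq]
  have hDA : Dᵀ * A - Bᵀ * C = 1 := by
    simpa using congrArg transpose hAD
  calc (C * T + D)ᵀ * (A - T' * C)
      = T * (Cᵀ * A - Aᵀ * C) + (Dᵀ * A - Bᵀ * C) := by
        rw [Matrix.mul_sub, ← Matrix.mul_assoc, hN]
        simp only [transpose_add, transpose_mul, hT.eq]
        noncomm_ring
    _ = 1 := by rw [← hAC, sub_self, Matrix.mul_zero, zero_add, hDA]

theorem symplecticAction_derivative_eq {𝕜 n : Type*} [NontriviallyNormedField 𝕜] [Fintype n]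
    [DecidableEq n] {A B C D : Matrix n n 𝕜} (hγ : fromBlocks A B C D ∈ symplecticGroup n 𝕜)
    {T : 𝕜 → Matrix n n 𝕜} {σ : 𝕜 → 𝕜} {U : Set 𝕜} {x s : 𝕜} {P Pσ : Matrix n n 𝕜}
    (hU : IsOpen U) (hx : x ∈ U) (hsymm : (T x).IsSymm) (hsymmσ : (T (σ x)).IsSymm)
    (hT : HasMatrixDerivAt T P x) (hTσ : HasMatrixDerivAt T Pσ (σ x)) (hσ : HasDerivAt σ s x)
    (hact : ∀ y ∈ U, T (σ y) * (C * T y + D) = A * T y + B) :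
    s • ((C * T x + D)ᵀ * Pσ * (C * T x + D)) = P := by
  have hd : s • Pσ * (C * T x + D) + T (σ x) * (C * P) = A * P :=
    ((hTσ.comp hσ).mul (hT.const_mul_add C D)).eq_of_eqOn hU hx hact (hT.const_mul_add A B)
  have hX : s • Pσ * (C * T x + D) = (A - T (σ x) * C) * P := by
    rw [Matrix.sub_mul, Matrix.mul_assoc, ← hd]
    abel
  calc s • ((C * T x + D)ᵀ * Pσ * (C * T x + D))
      = (C * T x + D)ᵀ * (s • Pσ * (C * T x + D)) := by
        rw [Matrix.mul_assoc, Matrix.smul_mul, Matrix.mul_smul]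
    _ = P := by
      rw [hX, ← Matrix.mul_assoc,
        transpose_mul_sub_mul_eq_one_s13 hγ hsymm hsymmσ (hact x hx), Matrix.one_mul]

theorem isSymm_Tcurve (τ2 τ3 : ℂ → ℂ) (x : ℂ) : (Tcurve τ2 τ3 x).IsSymm := by
  ext i j
  fin_cases i <;> fin_cases j <;> rfl

theorem hasMatrixDerivAt_Tcurve {τ2 τ3 : ℂ → ℂ} {x t : ℂ} (h2 : HasDerivAt τ2 (-t) x)
    (h3 : HasDerivAt τ3 (t ^ 2) x) :
    HasMatrixDerivAt (Tcurve τ2 τ3) (vecMulVec ![1, -t] ![1, -t]) x := by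
  intro i j
  fin_cases i <;> fin_cases j <;>
    simp only [Tcurve, Fin.zero_eta, Fin.mk_one, Fin.isValue, of_apply, cons_val', cons_val_zero,
      cons_val_one, cons_val_fin_one, vecMulVec_apply, mul_one, one_mul,
      one_pow, ← sq, neg_sq]
  exacts [hasDerivAt_id x, h2, h2, h3]

theorem fin_two_moebius_of_smul_congruence {R : Type*} [CommRing R] (M : Matrix (Fin 2) (Fin 2) R) {s t t' : R}
    (h : s • (Mᵀ * vecMulVec ![1, -t'] ![1, -t'] * M) = vecMulVec ![1, -t] ![1, -t]) :
    s * (M 0 0 - t' * M 1 0) ^ 2 = 1 ∧ M 0 0 * t + M 0 1 = t' * (M 1 0 * t + M 1 1) := by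
  have h00 := congrFun (congrFun h 0) 0
  have h01 := congrFun (congrFun h 0) 1
  simp only [Matrix.smul_apply, smul_eq_mul, Matrix.mul_apply, transpose_apply, vecMulVec_apply,
    Fin.sum_univ_two, cons_val_zero, cons_val_one, cons_val_fin_one] at h00 h01
  constructor
  · linear_combination h00
  · linear_combination (M 0 0 - t' * M 1 0) * h01 - (M 0 1 - t' * M 1 1) * h00

theorem hasDerivAt_entry_mul_add {𝕜 : Type*} [NontriviallyNormedField 𝕜]
    {M : 𝕜 → Matrix (Fin 2) (Fin 2) 𝕜} {C : Matrix (Fin 2) (Fin 2) 𝕜} {t : 𝕜 → 𝕜} {x v : 𝕜}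
    (hM : HasMatrixDerivAt M (C * vecMulVec ![1, -t x] ![1, -t x]) x) (ht : HasDerivAt t v x)
    (i : Fin 2) : HasDerivAt (fun y => M y i 0 * t y + M y i 1) (M x i 0 * v) x := by
  refine (((hM i 0).fun_mul ht).fun_add (hM i 1)).congr_deriv ?_
  simp only [Matrix.mul_apply, vecMulVec_apply, Fin.sum_univ_two, Matrix.cons_val_zero,
    Matrix.cons_val_one]
  ring

theorem eq_det_cube_div_pow_four_mul {K : Type*} [Field K] (M : Matrix (Fin 2) (Fin 2) K)
    {s t t' v v' : K} (hM : M.det ≠ 0) (hs : s * (M 0 0 - t' * M 1 0) ^ 2 = 1)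
    (hfa : M 0 0 * t + M 0 1 = t' * (M 1 0 * t + M 1 1))
    (hdv : M 0 0 * v = v' * s * (M 1 0 * t + M 1 1) + t' * (M 1 0 * v)) :
    v' = M.det ^ 3 / (M 1 0 * t + M 1 1) ^ 4 * v := by
  have hdet : M.det = (M 0 0 - t' * M 1 0) * (M 1 0 * t + M 1 1) := by
    rw [det_fin_two]
    linear_combination -M 1 0 * hfa
  have hq : M 1 0 * t + M 1 1 ≠ 0 := right_ne_zero_of_mul (hdet ▸ hM)
  have key : v' * (M 1 0 * t + M 1 1) = (M 0 0 - t' * M 1 0) ^ 3 * v := by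
    linear_combination (-(M 0 0 - t' * M 1 0) ^ 2) * hdv - v' * (M 1 0 * t + M 1 1) * hs
  rw [hdet]
  field_simp
  exact key

theorem v_transformation_general
    (H : Set ℂ) (hH : IsOpen H)
    (t τ2 τ3 v : ℂ → ℂ)
    (hv : ∀ τ ∈ H, HasDerivAt t (v τ) τ)
    (hτ2 : ∀ τ ∈ H, HasDerivAt τ2 (-(t τ)) τ)
    (hτ3 : ∀ τ ∈ H, HasDerivAt τ3 ((t τ) ^ 2) τ)
    (A B C D : Matrix (Fin 2) (Fin 2) ℝ)
    (hsp : (Matrix.fromBlocks A B C D)ᵀ * J2R * Matrix.fromBlocks A B C D = J2R)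
    (σ : ℂ → ℂ) (hσmap : Set.MapsTo σ H H)
    (hσdiff : ∀ τ ∈ H, DifferentiableAt ℂ σ τ)
    (hinv : ∀ τ ∈ H, IsUnit (matC C * Tcurve τ2 τ3 τ + matC D))
    (heq : ∀ τ ∈ H, Tcurve τ2 τ3 (σ τ)
      = (matC A * Tcurve τ2 τ3 τ + matC B) * (matC C * Tcurve τ2 τ3 τ + matC D)⁻¹) :
    ∀ τ ∈ H,
      v (σ τ)
        = ((matC C * Tcurve τ2 τ3 τ + matC D).det) ^ 3 /
            ((matC C * Tcurve τ2 τ3 τ + matC D) 1 0 * t τ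
              + (matC C * Tcurve τ2 τ3 τ + matC D) 1 1) ^ 4 * v τ := by
  set M := fun x => matC C * Tcurve τ2 τ3 x + matC D
  have hγ : fromBlocks (matC A) (matC B) (matC C) (matC D) ∈ symplecticGroup (Fin 2) ℂ := by
    have := SymplecticGroup.map_mem (SymplecticGroup.mem_iff'.mpr hsp) Complex.ofRealHom
    rwa [fromBlocks_map] at this
  have hT : ∀ x ∈ H, HasMatrixDerivAt (Tcurve τ2 τ3) (vecMulVec ![1, -t x] ![1, -t x]) x :=
    fun x hx => hasMatrixDerivAt_Tcurve (hτ2 x hx) (hτ3 x hx)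
  have hact : ∀ y ∈ H, Tcurve τ2 τ3 (σ y) * M y = matC A * Tcurve τ2 τ3 y + matC B :=
    fun y hy => by
      rw [heq y hy, nonsing_inv_mul_cancel_right _ _ ((isUnit_iff_isUnit_det _).mp (hinv y hy))]
  have hrel : ∀ x ∈ H, deriv σ x * (M x 0 0 - t (σ x) * M x 1 0) ^ 2 = 1 ∧
      M x 0 0 * t x + M x 0 1 = t (σ x) * (M x 1 0 * t x + M x 1 1) := fun x hx =>
    fin_two_moebius_of_smul_congruence _ <| symplecticAction_derivative_eq hγ hH hx (isSymm_Tcurve _ _ _)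
      (isSymm_Tcurve _ _ _) (hT x hx) (hT _ (hσmap hx)) (hσdiff x hx).hasDerivAt hact
  intro τ hτ
  obtain ⟨hs, hfa⟩ := hrel τ hτ
  have hdv : M τ 0 0 * v τ =
      v (σ τ) * deriv σ τ * (M τ 1 0 * t τ + M τ 1 1) + t (σ τ) * (M τ 1 0 * v τ) :=
    (hasDerivAt_entry_mul_add ((hT τ hτ).const_mul_add _ _) (hv τ hτ) 0).eq_of_eqOn hH hτ
      (fun y hy => (hrel y hy).2) <|
      ((hv _ (hσmap hτ)).comp τ (hσdiff τ hτ).hasDerivAt).fun_mul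
        (hasDerivAt_entry_mul_add ((hT τ hτ).const_mul_add _ _) (hv τ hτ) 1)
  exact eq_det_cube_div_pow_four_mul _
    ((isUnit_iff_isUnit_det _).mp (hinv τ hτ)).ne_zero hs hfa hdv

/-- If `τ₂' = -t`, `τ₃' = t²`, `γ = [[A,B],[C,D]] ∈ Sp₄(ℝ)` and `σ` satisfies
`T(σ(τ)) = (A·T(τ)+B)·(C·T(τ)+D)⁻¹` on a connected open `H`, then, writing
`C·T(τ)+D = [[𝔞,𝔟],[𝔠,𝔡]]`, the function `v = dt/dτ` satisfies
`v(σ(τ)) = (det(C·T(τ)+D)³/(𝔠t+𝔡)⁴)·v(τ)`. -/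
theorem v_transformation
    (H : Set ℂ) (hH : IsOpen H) (hconn : IsConnected H)
    (t τ2 τ3 v : ℂ → ℂ)
    (hv : ∀ τ ∈ H, HasDerivAt t (v τ) τ)
    (hv' : ∀ τ ∈ H, DifferentiableAt ℂ v τ)
    (hτ2 : ∀ τ ∈ H, HasDerivAt τ2 (-(t τ)) τ)
    (hτ3 : ∀ τ ∈ H, HasDerivAt τ3 ((t τ) ^ 2) τ)
    (A B C D : Matrix (Fin 2) (Fin 2) ℝ)
    (hsp : (Matrix.fromBlocks A B C D)ᵀ * J2R * Matrix.fromBlocks A B C D = J2R)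
    (σ : ℂ → ℂ) (hσmap : Set.MapsTo σ H H)
    (hσdiff : ∀ τ ∈ H, DifferentiableAt ℂ σ τ)
    (hinv : ∀ τ ∈ H, IsUnit (matC C * Tcurve τ2 τ3 τ + matC D))
    (heq : ∀ τ ∈ H, Tcurve τ2 τ3 (σ τ)
      = (matC A * Tcurve τ2 τ3 τ + matC B) * (matC C * Tcurve τ2 τ3 τ + matC D)⁻¹)
    (hcd : ∀ τ ∈ H,
      (matC C * Tcurve τ2 τ3 τ + matC D) 1 0 * t τ
        + (matC C * Tcurve τ2 τ3 τ + matC D) 1 1 ≠ 0) :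
    ∀ τ ∈ H,
      v (σ τ)
        = ((matC C * Tcurve τ2 τ3 τ + matC D).det) ^ 3 /
            ((matC C * Tcurve τ2 τ3 τ + matC D) 1 0 * t τ
              + (matC C * Tcurve τ2 τ3 τ + matC D) 1 1) ^ 4 * v τ :=
  v_transformation_general H hH t τ2 τ3 v hv hτ2 hτ3 A B C D hsp σ hσmap hσdiff hinv heq
end

section
/- Let U ⊆ ℂ be open and let u₀, u₁, u₂, u₃ : U → ℂ be differentiable functions with (u₀u₂' - u₀'u₂) + (u₁u₃' - u₁'u₃) = 0 identically on U and with u₀u₁' - u₀'u₁ ≠ 0 on U. Then the matrix T = [[u₃, u₃'],[u₂, u₂']]·[[u₁, u₁'],[u₀, u₀']]⁻¹ is symmetric; explicitly, T = [[w₀₃/w₀₁, w₃₁/w₀₁],[w₀₂/w₀₁, w₂₁/w₀₁]] with w_{jl} = u_j·u_l' - u_j'·u_l, and its off-diagonal entries agree since w₃₁ = w₀₂. -/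
open Matrix

/-- For differentiable `u₀, u₁, u₂, u₃` on an open `U ⊆ ℂ` (with derivative functions
`u1 j`) satisfying `W(u₀,u₂) + W(u₁,u₃) = 0` and `W(u₀,u₁) ≠ 0` on `U`, the matrix
`T = [[u₃,u₃'],[u₂,u₂']]·[[u₁,u₁'],[u₀,u₀']]⁻¹` equals
`(1/w₀₁)·[[w₀₃,w₃₁],[w₀₂,w₂₁]]` and is symmetric, the off-diagonal entries agreeing since
`w₃₁ = w₀₂`. -/
theorem period_matrix_symmetric
    (U : Set ℂ) (hU : IsOpen U)
    (u u1 : Fin 4 → ℂ → ℂ)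
    (hd : ∀ j, ∀ z ∈ U, HasDerivAt (u j) (u1 j z) z)
    (hw : ∀ z ∈ U,
      (u 0 z * u1 2 z - u1 0 z * u 2 z) + (u 1 z * u1 3 z - u1 1 z * u 3 z) = 0)
    (hw01 : ∀ z ∈ U, u 0 z * u1 1 z - u1 0 z * u 1 z ≠ 0) :
    ∀ z ∈ U,
      (!![u 3 z, u1 3 z; u 2 z, u1 2 z] * (!![u 1 z, u1 1 z; u 0 z, u1 0 z])⁻¹
          = (u 0 z * u1 1 z - u1 0 z * u 1 z)⁻¹ •
            !![u 0 z * u1 3 z - u1 0 z * u 3 z, u 3 z * u1 1 z - u1 3 z * u 1 z;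
               u 0 z * u1 2 z - u1 0 z * u 2 z, u 2 z * u1 1 z - u1 2 z * u 1 z]) ∧
      (!![u 3 z, u1 3 z; u 2 z, u1 2 z] * (!![u 1 z, u1 1 z; u 0 z, u1 0 z])⁻¹)ᵀ
          = !![u 3 z, u1 3 z; u 2 z, u1 2 z] * (!![u 1 z, u1 1 z; u 0 z, u1 0 z])⁻¹ ∧
      u 3 z * u1 1 z - u1 3 z * u 1 z = u 0 z * u1 2 z - u1 0 z * u 2 z := by
  intro z hz
  have h01 := hw01 z hz
  have hW := hw z hz
  have hdet : IsUnit (!![u 1 z, u1 1 z; u 0 z, u1 0 z]).det := by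
    simp only [Matrix.det_fin_two_of]
    apply isUnit_iff_ne_zero.mpr
    intro h
    exact h01 (by linear_combination -h)
  haveI := (!![u 1 z, u1 1 z; u 0 z, u1 0 z]).invertibleOfIsUnitDet hdet
  have key : !![u 3 z, u1 3 z; u 2 z, u1 2 z] * (!![u 1 z, u1 1 z; u 0 z, u1 0 z])⁻¹
      = (u 0 z * u1 1 z - u1 0 z * u 1 z)⁻¹ •
        !![u 0 z * u1 3 z - u1 0 z * u 3 z, u 3 z * u1 1 z - u1 3 z * u 1 z;
           u 0 z * u1 2 z - u1 0 z * u 2 z, u 2 z * u1 1 z - u1 2 z * u 1 z] := by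
    rw [Matrix.mul_inv_eq_iff_eq_mul_of_invertible]
    ext i j
    fin_cases i <;> fin_cases j <;>
      simp [Matrix.mul_apply, Fin.sum_univ_succ, Matrix.smul_apply] <;>
      field_simp [h01] <;> ring
  have h31 : u 3 z * u1 1 z - u1 3 z * u 1 z = u 0 z * u1 2 z - u1 0 z * u 2 z := by
    linear_combination -hW
  refine ⟨key, ?_, h31⟩
  rw [key]
  ext i j
  fin_cases i <;> fin_cases j <;>
    simp [Matrix.smul_apply, Matrix.transpose_apply, h31]
end
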